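/- arXiv:1803.11335 — 3 statements merged into one kernel-verified Lean document; each statement's English description precedes it below -/
import Mathlib

section
/- Let C be a linear code over a finite field F_q with generator matrix G. Then C is linear complementary dual (i.e., C ∩ C⊥ = {0}) if and only if the k×k matrix G·Gᵀ is nonsingular. -/
open Matrix Finset

def dualCode {F : Type*} [Field F] {n : ℕ} (C : Submodule F (Fin n → F)) :
    Submodule F (Fin n → F) where
  carrier := {x | ∀ y ∈ C, ∑ i, x i * y i = 0}
  zero_mem' := by intro y hy; simp
  add_mem' := by
    intro a b ha hb y hy
    have h1 := ha y hy; have h2 := hb y hy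
    simp [add_mul, Finset.sum_add_distrib, h1, h2]
  smul_mem' := by
    intro c a ha y hy
    have h1 := ha y hy
    simp [smul_eq_mul, mul_assoc, ← Finset.mul_sum, h1]

def IsLCD {F : Type*} [Field F] {n : ℕ} (C : Submodule F (Fin n → F)) : Prop :=
  C ⊓ dualCode C = ⊥

open Classical in
noncomputable def wt {F : Type*} [Field F] {n : ℕ} (x : Fin n → F) : ℕ :=
  (Finset.univ.filter fun i => x i ≠ 0).card

def monoMap {F : Type*} [Field F] {n : ℕ} (σ : Equiv.Perm (Fin n)) (c : Fin n → F) :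
    (Fin n → F) →ₗ[F] (Fin n → F) where
  toFun x := fun j => c j * x (σ j)
  map_add' := by intro a b; funext j; simp [mul_add]
  map_smul' := by intro r a; funext j; simp [smul_eq_mul]; ring

def CodeEquiv {F : Type*} [Field F] {n : ℕ} (C C' : Submodule F (Fin n → F)) : Prop :=
  ∃ (σ : Equiv.Perm (Fin n)) (c : Fin n → F), (∀ i, c i ≠ 0) ∧ C' = C.map (monoMap σ c)

def extendZero (F : Type*) [Field F] (n : ℕ) : (Fin n → F) →ₗ[F] (Fin (n+1) → F) where
  toFun x := Fin.snoc x 0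
  map_add' := by intro a b; funext j; refine Fin.lastCases ?_ ?_ j <;> simp
  map_smul' := by intro r a; funext j; refine Fin.lastCases ?_ ?_ j <;> simp

def hasMinWeight {F : Type*} [Field F] {n : ℕ} (C : Submodule F (Fin n → F)) (d : ℕ) : Prop :=
  (∃ x ∈ C, x ≠ 0 ∧ wt x = d) ∧ ∀ x ∈ C, x ≠ 0 → d ≤ wt x

theorem stmt0 {F : Type*} [Field F] [Fintype F] {n k : ℕ}
    (C : Submodule F (Fin n → F)) (G : Matrix (Fin k) (Fin n) F)
    (hspan : C = Submodule.span F (Set.range fun i => G i))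
    (hind : LinearIndependent F (fun i => G i)) :
    IsLCD C ↔ IsUnit (G * G.transpose) := by
  classical
  -- membership in C via vecMul
  have hmem : ∀ x : Fin n → F, x ∈ C ↔ ∃ v : Fin k → F, Matrix.vecMul v G = x := by
    intro x
    rw [hspan, Submodule.mem_span_range_iff_exists_fun]
    constructor
    · rintro ⟨v, hv⟩
      exact ⟨v, by funext j; rw [← hv]; simp [Matrix.vecMul, dotProduct,
        Finset.sum_apply]⟩
    · rintro ⟨v, hv⟩
      exact ⟨v, by funext j; rw [← hv]; simp [Matrix.vecMul, dotProduct,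
        Finset.sum_apply]⟩
  -- membership in dual via rows of G
  have hdual : ∀ x : Fin n → F, x ∈ dualCode C ↔ ∀ j, ∑ i, x i * G j i = 0 := by
    intro x
    constructor
    · intro hx j
      exact hx (G j) (hspan ▸ Submodule.subset_span ⟨j, rfl⟩)
    · intro h y hy
      rw [hspan] at hy
      induction hy using Submodule.span_induction with
      | mem y hy => obtain ⟨j, rfl⟩ := hy; exact h j
      | zero => simp
      | add a b _ _ ha hb => simp [mul_add, Finset.sum_add_distrib, ha, hb]
      | smul r a _ ha =>
          simp only [Pi.smul_apply, smul_eq_mul, mul_left_comm, ← Finset.mul_sum, ha, mul_zero]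
  -- key computation
  have hkey : ∀ (v : Fin k → F) (j : Fin k),
      (∑ i, Matrix.vecMul v G i * G j i) = Matrix.vecMul v (G * G.transpose) j := by
    intro v j
    simp only [Matrix.vecMul, dotProduct, Matrix.mul_apply, Matrix.transpose_apply,
      Finset.mul_sum, Finset.sum_mul]
    rw [Finset.sum_comm]
    apply Finset.sum_congr rfl
    intro i _
    apply Finset.sum_congr rfl
    intro a _
    ring
  have hinj : ∀ v : Fin k → F, Matrix.vecMul v G = 0 → v = 0 := by
    intro v hv
    have := Fintype.linearIndependent_iff.mp hind v ?_
    · funext i; exact this i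
    · funext j
      have := congrFun hv j
      simpa [Matrix.vecMul, dotProduct, Finset.sum_apply] using this
  rw [Matrix.isUnit_iff_isUnit_det, isUnit_iff_ne_zero]
  constructor
  · intro hLCD
    intro hdet
    obtain ⟨v, hv0, hv⟩ := (Matrix.exists_vecMul_eq_zero_iff).mpr hdet
    set x := Matrix.vecMul v G with hx
    have hxC : x ∈ C := (hmem x).mpr ⟨v, rfl⟩
    have hxD : x ∈ dualCode C := by
      rw [hdual]
      intro j
      rw [hkey v j, hv]
      rfl
    have hx0 : x = 0 := by
      have : x ∈ C ⊓ dualCode C := ⟨hxC, hxD⟩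
      rw [hLCD] at this
      simpa using this
    exact hv0 (hinj v hx0)
  · intro hdet
    rw [IsLCD, eq_bot_iff]
    rintro x ⟨hxC, hxD⟩
    obtain ⟨v, rfl⟩ := (hmem x).mp hxC
    have hv : Matrix.vecMul v (G * G.transpose) = 0 := by
      funext j
      rw [← hkey v j]
      exact (hdual _).mp hxD j
    have : v = 0 := by
      by_contra h0
      exact hdet ((Matrix.exists_vecMul_eq_zero_iff).mp ⟨v, h0, hv⟩)
    simp [this]
end

section
/- Let C be a linear code over F_q with parity-check matrix H (a generator matrix of C⊥). Then C is LCD if and only if H·Hᵀ is nonsingular. -/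
open Matrix Finset

/-! Since `C = (C⊥)⊥ = ker H` and `C⊥` is the row space `{v H}`, a codeword of `C ∩ C⊥` is a
vector `v H` with `H Hᵀ v = H (v H)ᵀ = 0`. The rows of `H` being independent, `v ↦ v H` is
injective, so `C ∩ C⊥ = 0` exactly when `H Hᵀ` has trivial kernel. -/

section DualCode

variable {F : Type*} [Field F] {n : ℕ}

lemma mem_dualCode {C : Submodule F (Fin n → F)} {x : Fin n → F} :
    x ∈ dualCode C ↔ ∀ y ∈ C, x ⬝ᵥ y = 0 :=
  Iff.rfl

lemma dotProductBilin_nondegenerate :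
    (dotProductBilin F F : LinearMap.BilinForm F (Fin n → F)).Nondegenerate := by
  refine ⟨fun x hx => funext fun i => ?_, fun y hy => funext fun i => ?_⟩
  · simpa using hx (Pi.single i 1)
  · simpa using hy (Pi.single i 1)

lemma dualCode_eq_orthogonal (C : Submodule F (Fin n → F)) :
    dualCode C = LinearMap.BilinForm.orthogonal (dotProductBilin F F) C := by
  ext x
  rw [mem_dualCode]
  exact forall₂_congr fun y _ => by simp [dotProduct_comm y x]

lemma dualCode_dualCode (C : Submodule F (Fin n → F)) : dualCode (dualCode C) = C := by
  rw [dualCode_eq_orthogonal, dualCode_eq_orthogonal]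
  exact LinearMap.BilinForm.orthogonal_orthogonal dotProductBilin_nondegenerate
    (fun x y h => by simpa [dotProduct_comm] using h) C

lemma dualCode_span_row {k : ℕ} (H : Matrix (Fin k) (Fin n) F) :
    dualCode (Submodule.span F (Set.range H.row)) = LinearMap.ker H.mulVecLin := by
  ext x
  rw [mem_dualCode, ← range_vecMulLinear, LinearMap.mem_ker, Matrix.mulVecLin_apply]
  refine ⟨fun hx => funext fun i => ?_, ?_⟩
  · exact (dotProduct_comm _ _).trans (hx (H i) ⟨Pi.single i 1, by simp [Matrix.row]⟩)
  · rintro hx _ ⟨v, rfl⟩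
    rw [vecMulLinear_apply, dotProduct_comm, ← dotProduct_mulVec, hx, dotProduct_zero]

end DualCode

namespace Matrix

variable {R K m l : Type*} [CommRing R] [Field K] [Fintype m] [Fintype l]

lemma mulVec_vecMul_self (H : Matrix m l R) (v : m → R) : H *ᵥ (v ᵥ* H) = (H * Hᵀ) *ᵥ v := by
  rw [← mulVec_transpose, mulVec_mulVec]

lemma range_vecMulLinear_inf_ker_mulVecLin (H : Matrix m l R) :
    LinearMap.range H.vecMulLinear ⊓ LinearMap.ker H.mulVecLin =
      (LinearMap.ker (H * Hᵀ).mulVecLin).map H.vecMulLinear := by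
  ext x
  simp only [Submodule.mem_inf, LinearMap.mem_range, LinearMap.mem_ker, Submodule.mem_map,
    vecMulLinear_apply, mulVecLin_apply]
  constructor
  · rintro ⟨⟨v, rfl⟩, hx⟩
    exact ⟨v, by rwa [← mulVec_vecMul_self], rfl⟩
  · rintro ⟨v, hv, rfl⟩
    exact ⟨⟨v, rfl⟩, by rwa [mulVec_vecMul_self]⟩

lemma range_vecMulLinear_inf_ker_mulVecLin_eq_bot_iff [DecidableEq m] {H : Matrix m l K}
    (hH : LinearIndependent K H.row) :
    LinearMap.range H.vecMulLinear ⊓ LinearMap.ker H.mulVecLin = ⊥ ↔ IsUnit (H * Hᵀ) := by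
  rw [range_vecMulLinear_inf_ker_mulVecLin,
    (Submodule.map_injective_of_injective (vecMul_injective_iff.2 hH)).eq_iff'
      (Submodule.map_bot _), LinearMap.ker_eq_bot, ← mulVec_injective_iff_isUnit]
  rfl

end Matrix

theorem stmt2_general {F : Type*} [Field F] {n k : ℕ}
    (C : Submodule F (Fin n → F)) (H : Matrix (Fin k) (Fin n) F)
    (hspan : dualCode C = Submodule.span F (Set.range fun i => H i))
    (hind : LinearIndependent F (fun i => H i)) :
    IsLCD C ↔ IsUnit (H * H.transpose) := by
  change dualCode C = Submodule.span F (Set.range H.row) at hspan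
  have hC : C = LinearMap.ker H.mulVecLin := by
    rw [← dualCode_dualCode C, hspan, dualCode_span_row]
  rw [IsLCD, hspan, hC, inf_comm, ← range_vecMulLinear]
  exact Matrix.range_vecMulLinear_inf_ker_mulVecLin_eq_bot_iff hind

theorem stmt2 {F : Type*} [Field F] [Fintype F] {n k : ℕ}
    (C : Submodule F (Fin n → F)) (H : Matrix (Fin k) (Fin n) F)
    (hspan : dualCode C = Submodule.span F (Set.range fun i => H i))
    (hind : LinearIndependent F (fun i => H i)) :
    IsLCD C ↔ IsUnit (H * H.transpose) :=
  stmt2_general C H hspan hind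
end

section
/- The number of equivalence classes of ternary LCD [n,1] codes equals 2n/3 if n ≡ 0 (mod 3), (2n+1)/3 if n ≡ 1 (mod 3), and (2n+2)/3 if n ≡ 2 (mod 3). -/
open Matrix Finset

-- ===== auxiliary lemmas =====

section AuxLemmas
variable {n : ℕ}

lemma wt_card (x : Fin n → ZMod 3) : wt x = Fintype.card {i // x i ≠ 0} := by
  classical
  rw [Fintype.card_subtype]; unfold wt; congr 1; apply Finset.filter_congr_decidable

lemma wt_smul (c : ZMod 3) (hc : c ≠ 0) (x : Fin n → ZMod 3) : wt (c • x) = wt x := by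
  rw [wt_card, wt_card]
  refine Fintype.card_congr ((Equiv.refl (Fin n)).subtypeEquiv fun a => ?_)
  simp [Pi.smul_apply, smul_eq_mul, mul_eq_zero, hc]

lemma wt_eq_zero (x : Fin n → ZMod 3) : wt x = 0 ↔ x = 0 := by
  classical
  unfold wt
  simp [Finset.filter_eq_empty_iff, Finset.card_eq_zero, funext_iff]

lemma wt_le (x : Fin n → ZMod 3) : wt x ≤ n := by
  rw [wt_card]
  simpa using Fintype.card_subtype_le (fun i => x i ≠ 0)

lemma sum_sq (x : Fin n → ZMod 3) : ∑ i, x i * x i = (wt x : ZMod 3) := by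
  classical
  have h : ∀ i, x i * x i = if x i ≠ 0 then (1 : ZMod 3) else 0 := by
    intro i
    have : ∀ a : ZMod 3, a * a = if a ≠ 0 then (1 : ZMod 3) else 0 := by decide
    exact this _
  rw [Finset.sum_congr rfl (fun i _ => h i), Finset.sum_boole]
  unfold wt
  congr

lemma wt_monoMap (σ : Equiv.Perm (Fin n)) (c : Fin n → ZMod 3) (hc : ∀ i, c i ≠ 0)
    (x : Fin n → ZMod 3) : wt (monoMap σ c x) = wt x := by
  rw [wt_card, wt_card]
  have e : {j // monoMap σ c x j ≠ 0} ≃ {i // x i ≠ 0} := by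
    refine σ.subtypeEquiv fun a => ?_
    show monoMap σ c x a ≠ 0 ↔ x (σ a) ≠ 0
    simp [monoMap, mul_eq_zero, hc a]
  exact Fintype.card_congr e

lemma gen_exists {C : Submodule (ZMod 3) (Fin n → ZMod 3)}
    (h : Module.finrank (ZMod 3) C = 1) :
    ∃ x : Fin n → ZMod 3, x ≠ 0 ∧ C = Submodule.span (ZMod 3) {x} := by
  obtain ⟨v, hv0, hv⟩ := finrank_eq_one_iff'.mp h
  refine ⟨v.1, by simpa [Submodule.coe_eq_zero] using hv0, le_antisymm ?_ ?_⟩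
  · intro w hw
    obtain ⟨c, hc⟩ := hv ⟨w, hw⟩
    have : c • v.1 = w := congrArg Subtype.val hc
    rw [← this]
    exact Submodule.smul_mem _ _ (Submodule.mem_span_singleton_self _)
  · rw [Submodule.span_le, Set.singleton_subset_iff]
    exact v.2

lemma span_eq_span {x y : Fin n → ZMod 3} (hy : y ≠ 0)
    (h : Submodule.span (ZMod 3) {y} = Submodule.span (ZMod 3) {x}) :
    ∃ c : ZMod 3, c ≠ 0 ∧ y = c • x := by
  have : y ∈ Submodule.span (ZMod 3) {x} := h ▸ Submodule.mem_span_singleton_self y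
  obtain ⟨c, hc⟩ := Submodule.mem_span_singleton.mp this
  refine ⟨c, fun h0 => hy ?_, hc.symm⟩
  rw [← hc, h0, zero_smul]

lemma lcd_span_iff {x : Fin n → ZMod 3} (hx : x ≠ 0) :
    IsLCD (Submodule.span (ZMod 3) {x}) ↔ ∑ i, x i * x i ≠ 0 := by
  constructor
  · intro h hs
    have hxd : x ∈ dualCode (Submodule.span (ZMod 3) {x}) := by
      intro y hy
      obtain ⟨c, hc⟩ := Submodule.mem_span_singleton.mp hy
      rw [← hc]
      simp only [Pi.smul_apply, smul_eq_mul]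
      calc ∑ i, x i * (c * x i) = c * ∑ i, x i * x i := by
            rw [Finset.mul_sum]; exact Finset.sum_congr rfl fun i _ => by ring
        _ = 0 := by rw [hs, mul_zero]
    have : x ∈ (⊥ : Submodule (ZMod 3) (Fin n → ZMod 3)) := by
      rw [← h]; exact ⟨Submodule.mem_span_singleton_self x, hxd⟩
    exact hx (by simpa using this)
  · intro hs
    rw [IsLCD, Submodule.eq_bot_iff]
    rintro z ⟨hz1, hz2⟩
    obtain ⟨c, hc⟩ := Submodule.mem_span_singleton.mp hz1
    have := hz2 x (Submodule.mem_span_singleton_self x)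
    rw [← hc] at this ⊢
    simp only [Pi.smul_apply, smul_eq_mul] at this
    have hc0 : c * ∑ i, x i * x i = 0 := by
      rw [Finset.mul_sum, ← this]
      exact Finset.sum_congr rfl fun i _ => by ring
    rcases mul_eq_zero.mp hc0 with h | h
    · rw [h, zero_smul]
    · exact absurd h hs

lemma map_span (f : (Fin n → ZMod 3) →ₗ[ZMod 3] (Fin n → ZMod 3)) (x : Fin n → ZMod 3) :
    (Submodule.span (ZMod 3) {x}).map f = Submodule.span (ZMod 3) {f x} := by
  rw [Submodule.map_span, Set.image_singleton]

lemma equiv_of_wt_eq {x y : Fin n → ZMod 3} (h : wt x = wt y) :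
    CodeEquiv (Submodule.span (ZMod 3) {x}) (Submodule.span (ZMod 3) {y}) := by
  classical
  have hcard : Fintype.card {j // y j ≠ 0} = Fintype.card {i // x i ≠ 0} := by
    rw [← wt_card, ← wt_card, h]
  obtain ⟨e⟩ := Fintype.card_eq.mp hcard
  set σ : Equiv.Perm (Fin n) := e.extendSubtype with hσ
  set c : Fin n → ZMod 3 := fun j => if x (σ j) = 0 then 1 else y j * (x (σ j))⁻¹ with hcdef
  have hmem : ∀ j, y j ≠ 0 → x (σ j) ≠ 0 := fun j hj => e.extendSubtype_mem j hj
  have hnmem : ∀ j, y j = 0 → x (σ j) = 0 := by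
    intro j hj
    by_contra hx
    exact hx (by_contra fun hxx => (e.extendSubtype_not_mem j (by simp [hj]) hxx))
  have hc : ∀ j, c j ≠ 0 := by
    intro j
    by_cases hxj : x (σ j) = 0
    · simp [hcdef, hxj]
    · have hyj : y j ≠ 0 := by
        intro h0; exact hxj (hnmem j h0)
      simp [hcdef, hxj, hyj, inv_eq_zero]
  refine ⟨σ, c, hc, ?_⟩
  rw [map_span]
  have hxy : monoMap σ c x = y := by
    funext j
    show c j * x (σ j) = y j
    by_cases hxj : x (σ j) = 0
    · have : y j = 0 := by
        by_contra hyj; exact hmem j hyj hxj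
      simp [this, hxj]
    · simp only [hcdef, hxj, if_false]
      field_simp
  rw [hxy]

lemma Tcard (n : ℕ) :
    (((Finset.Icc 1 n).filter (fun w => ¬ w % 3 = 0)).card) = n - n / 3 := by
  induction n with
  | zero => simp
  | succ m ih =>
    rw [← Finset.insert_Icc_right_eq_Icc_add_one (by omega : 1 ≤ m + 1), Finset.filter_insert]
    by_cases h : (m + 1) % 3 = 0
    · rw [if_neg (by simpa using h)]
      omega
    · rw [if_pos (by simpa using h), Finset.card_insert_of_notMem (by simp)]
      omega
end AuxLemmas

abbrev GoodCode (n : ℕ) := {C : Submodule (ZMod 3) (Fin n → ZMod 3) //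
    Module.finrank (ZMod 3) C = 1 ∧ IsLCD C}

noncomputable def gOf {n : ℕ} (C : GoodCode n) : Fin n → ZMod 3 :=
  Classical.choose (gen_exists C.2.1)

lemma gOf_ne {n : ℕ} (C : GoodCode n) : gOf C ≠ 0 :=
  (Classical.choose_spec (gen_exists C.2.1)).1

lemma gOf_span {n : ℕ} (C : GoodCode n) :
    C.1 = Submodule.span (ZMod 3) {gOf C} :=
  (Classical.choose_spec (gen_exists C.2.1)).2

lemma wt_gen_eq {n : ℕ} (C : GoodCode n) {x : Fin n → ZMod 3}
    (hspan : C.1 = Submodule.span (ZMod 3) {x}) : wt (gOf C) = wt x := by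
  have h : Submodule.span (ZMod 3) {gOf C} = Submodule.span (ZMod 3) {x} := by
    rw [← gOf_span C, hspan]
  obtain ⟨c, hc, hcx⟩ := span_eq_span (gOf_ne C) h
  rw [hcx, wt_smul c hc]

lemma r_forward {n : ℕ} {C C' : GoodCode n} (h : CodeEquiv C.1 C'.1) :
    wt (gOf C) = wt (gOf C') := by
  obtain ⟨σ, c, hc, hmap⟩ := h
  have hspan' : C'.1 = Submodule.span (ZMod 3) {monoMap σ c (gOf C)} := by
    rw [hmap, gOf_span C, map_span]
  have := wt_gen_eq C' hspan'
  rw [this, wt_monoMap σ c hc]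

lemma r_backward {n : ℕ} {C C' : GoodCode n} (h : wt (gOf C) = wt (gOf C')) :
    CodeEquiv C.1 C'.1 := by
  rw [gOf_span C, gOf_span C']
  exact equiv_of_wt_eq h

lemma wt_gOf_mem {n : ℕ} (C : GoodCode n) :
    wt (gOf C) ∈ (Finset.Icc 1 n).filter (fun w => ¬ w % 3 = 0) := by
  have h1 : wt (gOf C) ≠ 0 := fun h0 => gOf_ne C ((wt_eq_zero _).mp h0)
  have h2 : wt (gOf C) ≤ n := wt_le _
  have hlcd : IsLCD C.1 := C.2.2
  rw [gOf_span C] at hlcd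
  have h3 := (lcd_span_iff (gOf_ne C)).mp hlcd
  rw [sum_sq] at h3
  have h4 : ¬ (3 : ℕ) ∣ wt (gOf C) := fun hd =>
    h3 ((ZMod.natCast_eq_zero_iff _ 3).mpr hd)
  simp only [Finset.mem_filter, Finset.mem_Icc]
  exact ⟨⟨by omega, h2⟩, by omega⟩

lemma surj_code {n w : ℕ} (hw1 : 1 ≤ w) (hwn : w ≤ n) (hw3 : ¬ w % 3 = 0) :
    ∃ C : GoodCode n, wt (gOf C) = w := by
  classical
  set x : Fin n → ZMod 3 := fun i => if (i : ℕ) < w then 1 else 0 with hxdef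
  have hwt : wt x = w := by
    rw [wt_card]
    have e1 : {i // x i ≠ 0} ≃ {i : Fin n // (i : ℕ) < w} := by
      refine (Equiv.refl (Fin n)).subtypeEquiv fun i => ?_
      by_cases h : (i : ℕ) < w <;> simp [hxdef, h]
    have e2 : {i : Fin n // (i : ℕ) < w} ≃ Fin w :=
      ⟨fun i => ⟨i.1, i.2⟩, fun j => ⟨⟨j.1, lt_of_lt_of_le j.2 hwn⟩, j.2⟩,
        fun i => by ext; rfl, fun j => by ext; rfl⟩
    rw [Fintype.card_congr (e1.trans e2), Fintype.card_fin]
  have hx : x ≠ 0 := fun h0 => by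
    rw [h0] at hwt
    have : wt (0 : Fin n → ZMod 3) = 0 := (wt_eq_zero _).mpr rfl
    omega
  have hdvd : ¬ (3 : ℕ) ∣ w := by omega
  have hlcd : IsLCD (Submodule.span (ZMod 3) {x}) := by
    rw [lcd_span_iff hx, sum_sq, hwt]
    exact fun h0 => hdvd ((ZMod.natCast_eq_zero_iff w 3).mp h0)
  refine ⟨⟨Submodule.span (ZMod 3) {x}, finrank_span_singleton hx, hlcd⟩, ?_⟩
  rw [wt_gen_eq ⟨Submodule.span (ZMod 3) {x}, finrank_span_singleton hx, hlcd⟩ rfl, hwt]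

noncomputable def Gfun (n : ℕ) :
    Quot (fun C C' : GoodCode n => CodeEquiv C.1 C'.1) →
      {w // w ∈ (Finset.Icc 1 n).filter (fun w => ¬ w % 3 = 0)} :=
  Quot.lift (fun C => ⟨wt (gOf C), wt_gOf_mem C⟩)
    (fun _ _ h => Subtype.ext (r_forward h))

lemma Gfun_mk (n : ℕ) (C : GoodCode n) :
    Gfun n (Quot.mk _ C) = ⟨wt (gOf C), wt_gOf_mem C⟩ := rfl

lemma Gfun_bij (n : ℕ) : Function.Bijective (Gfun n) := by
  constructor
  · intro a b
    induction a using Quot.ind with | _ C =>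
    induction b using Quot.ind with | _ C' =>
    intro hab
    rw [Gfun_mk, Gfun_mk] at hab
    exact Quot.sound (r_backward (congrArg Subtype.val hab))
  · rintro ⟨w, hw⟩
    simp only [Finset.mem_filter, Finset.mem_Icc] at hw
    obtain ⟨C, hC⟩ := surj_code hw.1.1 hw.1.2 hw.2
    exact ⟨Quot.mk _ C, by rw [Gfun_mk]; exact Subtype.ext hC⟩

theorem stmt15 (n : ℕ) :
    Nat.card (Quot fun (C C' : {C : Submodule (ZMod 3) (Fin n → ZMod 3) //
        Module.finrank (ZMod 3) C = 1 ∧ IsLCD C}) => CodeEquiv C.1 C'.1) =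
      if n % 3 = 0 then 2 * n / 3
      else if n % 3 = 1 then (2 * n + 1) / 3
      else (2 * n + 2) / 3 := by
  classical
  rw [Nat.card_eq_of_bijective (Gfun n) (Gfun_bij n), Nat.card_eq_finsetCard, Tcard]
  split_ifs <;> omega
end
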